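/- arXiv:2012.03582 — 4 statements merged into one kernel-verified Lean document; each statement's English description precedes it below -/
import Mathlib

section
/- Every vertex v of minimum tenacity t_m has a well-defined base: the set B(v) of vertices F(p, v), taken over all evenlevel(v) and oddlevel(v) paths p, is a singleton, provided t_m < l_m. -/
open scoped Classical

universe u

variable {V : Type u}

/-- A finite-or-infinite undirected graph together with a matching. -/
structure MatchedGraph (V : Type u) where
  adj : V → V → Prop
  symm : ∀ u v, adj u v → adj v u
  loopless : ∀ v, ¬ adj v v
  M : V → V → Prop
  M_symm : ∀ u v, M u v → M v u
  M_sub : ∀ u v, M u v → adj u v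
  M_matching : ∀ u v w, M u v → M u w → v = w

namespace MatchedGraph

/-- A vertex is unmatched if no matched edge is incident to it. -/
def unmatched (g : MatchedGraph V) (v : V) : Prop := ∀ u, ¬ g.M v u

/-- `p` is a simple alternating path starting at `b` and ending at `v`,
whose first edge is unmatched and whose edges alternate unmatched/matched.
(The `i`-th edge is matched iff `i` is odd.) -/
def AltPath (g : MatchedGraph V) (p : List V) (b v : V) : Prop :=
  p.head? = some b ∧ p.getLast? = some v ∧ p.Nodup ∧
  ∀ i, i + 1 < p.length →
    g.adj (p.getD i b) (p.getD (i + 1) b) ∧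
      (g.M (p.getD i b) (p.getD (i + 1) b) ↔ i % 2 = 1)

/-- An alternating path from an *unmatched* vertex `f` to `v`. -/
def AltPathFrom (g : MatchedGraph V) (p : List V) (f v : V) : Prop :=
  g.unmatched f ∧ g.AltPath p f v

/-- Minimum length of an even alternating path from an unmatched vertex to `v`. -/
noncomputable def evenlevel (g : MatchedGraph V) (v : V) : ℕ∞ :=
  sInf {n : ℕ∞ | ∃ p f, g.AltPathFrom p f v ∧ Even (p.length - 1) ∧
    n = ((p.length - 1 : ℕ) : ℕ∞)}

/-- Minimum length of an odd alternating path from an unmatched vertex to `v`. -/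
noncomputable def oddlevel (g : MatchedGraph V) (v : V) : ℕ∞ :=
  sInf {n : ℕ∞ | ∃ p f, g.AltPathFrom p f v ∧ Odd (p.length - 1) ∧
    n = ((p.length - 1 : ℕ) : ℕ∞)}

noncomputable def tenacity (g : MatchedGraph V) (v : V) : ℕ∞ :=
  g.evenlevel v + g.oddlevel v

noncomputable def minlevel (g : MatchedGraph V) (v : V) : ℕ∞ :=
  min (g.evenlevel v) (g.oddlevel v)

noncomputable def maxlevel (g : MatchedGraph V) (v : V) : ℕ∞ :=
  max (g.evenlevel v) (g.oddlevel v)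

/-- Minimum length of an augmenting path: an alternating path between two
distinct unmatched vertices. -/
noncomputable def lm (g : MatchedGraph V) : ℕ∞ :=
  sInf {n : ℕ∞ | ∃ p f v, g.AltPathFrom p f v ∧ g.unmatched v ∧ f ≠ v ∧
    n = ((p.length - 1 : ℕ) : ℕ∞)}

/-- Minimum tenacity of any vertex. -/
noncomputable def tm (g : MatchedGraph V) : ℕ∞ := ⨅ v, g.tenacity v

/-- `p` is an `evenlevel(v)` path starting at the unmatched vertex `f`. -/
def IsEvenlevelPath (g : MatchedGraph V) (p : List V) (f v : V) : Prop :=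
  g.AltPathFrom p f v ∧ Even (p.length - 1) ∧
    ((p.length - 1 : ℕ) : ℕ∞) = g.evenlevel v

/-- `p` is an `oddlevel(v)` path starting at the unmatched vertex `f`. -/
def IsOddlevelPath (g : MatchedGraph V) (p : List V) (f v : V) : Prop :=
  g.AltPathFrom p f v ∧ Odd (p.length - 1) ∧
    ((p.length - 1 : ℕ) : ℕ∞) = g.oddlevel v

/-- `p` is a `minlevel(v)` path starting at the unmatched vertex `f`. -/
def IsMinlevelPath (g : MatchedGraph V) (p : List V) (f v : V) : Prop :=
  g.AltPathFrom p f v ∧ ((p.length - 1 : ℕ) : ℕ∞) = g.minlevel v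

/-- `p` is a `maxlevel(v)` path starting at the unmatched vertex `f`. -/
def IsMaxlevelPath (g : MatchedGraph V) (p : List V) (f v : V) : Prop :=
  g.AltPathFrom p f v ∧ ((p.length - 1 : ℕ) : ℕ∞) = g.maxlevel v

/-- The vertex at position `i` of `p` (whose prefix from `f` has length `i`)
is BFS-honest w.r.t. `p`. -/
def BFSHonest (g : MatchedGraph V) (p : List V) (f : V) (i : ℕ) : Prop :=
  (Even i → g.evenlevel (p.getD i f) = (i : ℕ∞)) ∧
  (Odd i → g.oddlevel (p.getD i f) = (i : ℕ∞))

/-- `u` is a predecessor of `v`: `(u, v)` is the last edge of some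
`minlevel(v)` path. -/
def IsPred (g : MatchedGraph V) (u v : V) : Prop :=
  ∃ p f, g.IsMinlevelPath p f v ∧ 2 ≤ p.length ∧ p.getD (p.length - 2) f = u

/-- A prop is an edge which is the last edge of a minlevel path to one of its
endpoints. -/
def IsPropEdge (g : MatchedGraph V) (u v : V) : Prop :=
  g.IsPred u v ∨ g.IsPred v u

/-- A bridge is an edge that is not a prop. -/
def IsBridge (g : MatchedGraph V) (u v : V) : Prop :=
  g.adj u v ∧ ¬ g.IsPropEdge u v

/-- Tenacity of an edge. -/
noncomputable def etenacity (g : MatchedGraph V) (u v : V) : ℕ∞ :=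
  if g.M u v then g.oddlevel u + g.oddlevel v + 1
  else g.evenlevel u + g.evenlevel v + 1

/-- The set `B(v)` of all `F(p, v)`: for each `evenlevel(v)` or `oddlevel(v)`
path `p`, the vertex on `p` farthest from the unmatched endpoint among the
vertices of tenacity greater than `tenacity(v)`. -/
def Bset (g : MatchedGraph V) (v : V) : Set V :=
  {b | ∃ p f i, (g.IsEvenlevelPath p f v ∨ g.IsOddlevelPath p f v) ∧
    i < p.length ∧ b = p.getD i f ∧ g.tenacity v < g.tenacity b ∧
    ∀ k, i < k → k < p.length → g.tenacity (p.getD k f) ≤ g.tenacity v}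

/-- `b` is the (unique) base of `v`. -/
def baseOf (g : MatchedGraph V) (v b : V) : Prop := g.Bset v = {b}

/-- Iterated bases: `iterBase k v b` means `b = base^k(v)` (with `base^0(v) = v`). -/
def iterBase (g : MatchedGraph V) : ℕ → V → V → Prop
  | 0, v, b => v = b
  | k + 1, v, b => ∃ u, g.iterBase k v u ∧ g.baseOf u b

/-- A vertex is outer if `evenlevel(v) < oddlevel(v)`. -/
def IsOuter (g : MatchedGraph V) (v : V) : Prop := g.evenlevel v < g.oddlevel v

/-- A vertex is inner if it is not outer. -/
def IsInner (g : MatchedGraph V) (v : V) : Prop := g.oddlevel v ≤ g.evenlevel v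

/-- The set `S_{b,t}` of vertices of tenacity `t` with base `b`. -/
def Sset (g : MatchedGraph V) (t : ℕ) (b : V) : Set V :=
  {v | g.tenacity v = (t : ℕ∞) ∧ g.baseOf v b}

/-- The blossom `B_{b,t}`, defined recursively. -/
def blossom (g : MatchedGraph V) : ℕ → V → Set V
  | 0, _ => ∅
  | 1, _ => ∅
  | t + 2, b => g.Sset (t + 2) b ∪
      ⋃ v ∈ {v | (v ∈ g.Sset (t + 2) b ∨ v = b) ∧ g.IsOuter v}, blossom g t v

/-- The nesting depth `N(B_{b,t})` of a blossom. -/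
noncomputable def ndepth (g : MatchedGraph V) [Fintype V] : ℕ → V → ℕ
  | 0, _ => 0
  | 1, _ => 0
  | t + 2, b =>
    if (g.Sset (t + 2) b).Nonempty then
      1 + Finset.univ.sup (fun v =>
        if (v ∈ g.Sset (t + 2) b ∨ v = b) ∧ g.IsOuter v then ndepth g t v else 0)
    else ndepth g t b

/-- `evenlevel(b; v)`: minimum even length of an alternating path from `b` to
`v` starting with an unmatched edge. -/
noncomputable def evenlevelFrom (g : MatchedGraph V) (b v : V) : ℕ∞ :=
  sInf {n : ℕ∞ | ∃ p, g.AltPath p b v ∧ Even (p.length - 1) ∧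
    n = ((p.length - 1 : ℕ) : ℕ∞)}

/-- `oddlevel(b; v)`: minimum odd length of an alternating path from `b` to
`v` starting with an unmatched edge. -/
noncomputable def oddlevelFrom (g : MatchedGraph V) (b v : V) : ℕ∞ :=
  sInf {n : ℕ∞ | ∃ p, g.AltPath p b v ∧ Odd (p.length - 1) ∧
    n = ((p.length - 1 : ℕ) : ℕ∞)}

end MatchedGraph

/-!
Let `v` have minimum tenacity `t`, and let `P`, `Q` be level paths of `v` of opposite parities, so
that `|P| + |Q| = t`. Gluing a prefix of one path to a suffix of the other yields alternating
paths; comparing their lengths with the minimality of `t`, `|P|` and `|Q|` shows that `P` and `Q`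
meet only at equal positions `k` (before `v`), and that the level of parity `k` of such a common
vertex is exactly `k`. Beyond every vertex of `Q` of tenacity above `t` there is a common vertex.
Let `a` be a common vertex beyond both `F(P, v)` and `F(Q, v)`. Either both candidates equal
`P.w a`, or `P.w a` has tenacity `t` and smaller minlevel than `v`, and the truncations of `P` and
`Q` at `a` put both candidates into `B(P.w a)`: induction on the minlevel concludes. Two level
paths of the same parity are compared through one of the other parity; `F` exists on every level
path because unmatched vertices have tenacity at least `l_m > t`.
-/

namespace MatchedGraph

variable {g : MatchedGraph V}

/-- A simple alternating path `w 0, …, w n`, indexed by `ℕ` so that it can be cut and spliced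
by arithmetic on indices. -/
structure AltSeq (g : MatchedGraph V) where
  n : ℕ
  w : ℕ → V
  inj : ∀ ⦃i j⦄, i ≤ n → j ≤ n → w i = w j → i = j
  alt : ∀ i, i + 1 ≤ n → g.adj (w i) (w (i + 1)) ∧ (g.M (w i) (w (i + 1)) ↔ i % 2 = 1)

namespace AltSeq

def toList (P : AltSeq g) : List V := (List.range (P.n + 1)).map P.w

@[simp] lemma length_toList (P : AltSeq g) : P.toList.length = P.n + 1 := by
  simp [toList]

lemma getD_toList (P : AltSeq g) {i : ℕ} (hi : i ≤ P.n) (b : V) :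
    P.toList.getD i b = P.w i := by
  simp [toList, List.getD_eq_getElem?_getD, Nat.lt_succ_of_le hi]

lemma altPath_toList (P : AltSeq g) : g.AltPath P.toList (P.w 0) (P.w P.n) := by
  refine ⟨by simp [toList, List.range_succ_eq_map], by simp [toList, List.getLast?_eq_getElem?],
    ?_, ?_⟩
  · refine List.Nodup.map_on (fun x hx y hy => P.inj ?_ ?_) List.nodup_range
    · simpa [Nat.lt_succ_iff] using hx
    · simpa [Nat.lt_succ_iff] using hy
  · intro i hi
    rw [length_toList] at hi
    rw [getD_toList P (by omega), getD_toList P (by omega)]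
    exact P.alt i (by omega)

lemma exists_of_altPath {p : List V} {f v : V} (h : g.AltPath p f v) :
    ∃ P : AltSeq g, P.n + 1 = p.length ∧ (∀ j, P.w j = p.getD j f) ∧ P.w 0 = f ∧ P.w P.n = v := by
  obtain ⟨hhead, hlast, hnd, halt⟩ := h
  have hne : p ≠ [] := by rintro rfl; simp at hhead
  have hlen : 0 < p.length := List.length_pos_iff.mpr hne
  have hgetD : ∀ i (hi : i < p.length), p.getD i f = p[i] := fun i hi => by
    simp [List.getD_eq_getElem?_getD, hi]
  refine ⟨⟨p.length - 1, fun j => p.getD j f, fun i j hi hj hij => ?_,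
    fun i hi => halt i (by omega)⟩, Nat.sub_add_cancel hlen, fun _ => rfl, ?_, ?_⟩
  · rw [hgetD i (by omega), hgetD j (by omega)] at hij
    simpa using List.nodup_iff_injective_get.mp hnd hij
  · rw [List.head?_eq_getElem?, List.getElem?_eq_getElem hlen] at hhead
    simpa [List.getD_eq_getElem?_getD, hlen] using hhead
  · rw [List.getLast?_eq_getElem?, List.getElem?_eq_getElem (by omega)] at hlast
    simpa [List.getD_eq_getElem?_getD, hlen] using hlast

def trunc (P : AltSeq g) (a : ℕ) (ha : a ≤ P.n) : AltSeq g where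
  n := a
  w := P.w
  inj _ _ hi hj h := P.inj (hi.trans ha) (hj.trans ha) h
  alt i hi := P.alt i (hi.trans ha)

lemma w_ne_w_n (P : AltSeq g) {i : ℕ} (hi : i < P.n) : P.w i ≠ P.w P.n :=
  fun h => absurd (P.inj hi.le le_rfl h) hi.ne

end AltSeq

noncomputable def parityLevel (g : MatchedGraph V) (r : ℕ) (u : V) : ℕ∞ :=
  if r % 2 = 0 then g.evenlevel u else g.oddlevel u

lemma parityLevel_congr {r s : ℕ} (h : r % 2 = s % 2) (u : V) :
    g.parityLevel r u = g.parityLevel s u := by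
  simp only [parityLevel, h]

lemma parityLevel_eq_sInf (r : ℕ) (u : V) :
    g.parityLevel r u = sInf {n : ℕ∞ | ∃ P : AltSeq g,
      g.unmatched (P.w 0) ∧ P.w P.n = u ∧ P.n % 2 = r % 2 ∧ n = P.n} := by
  have key : ∀ q : ℕ → Prop, (∀ m, q m ↔ m % 2 = r % 2) →
      {n : ℕ∞ | ∃ p f, g.AltPathFrom p f u ∧ q (p.length - 1) ∧
        n = ((p.length - 1 : ℕ) : ℕ∞)} =
      {n : ℕ∞ | ∃ P : AltSeq g, g.unmatched (P.w 0) ∧ P.w P.n = u ∧ P.n % 2 = r % 2 ∧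
        n = P.n} := by
    intro q hq
    ext n
    constructor
    · rintro ⟨p, f, ⟨hf, hp⟩, hqp, rfl⟩
      obtain ⟨P, hn, -, h0, hend⟩ := AltSeq.exists_of_altPath hp
      have hn' : P.n = p.length - 1 := by omega
      exact ⟨P, h0 ▸ hf, hend, hn' ▸ (hq _).1 hqp, by rw [hn']⟩
    · rintro ⟨P, hf, rfl, hpar, rfl⟩
      exact ⟨P.toList, P.w 0, ⟨hf, P.altPath_toList⟩, by simpa [hq] using hpar, by simp⟩
  unfold parityLevel evenlevel oddlevel
  split_ifs with h
  · rw [key Even fun m => by rw [Nat.even_iff, h]]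
  · rw [key Odd fun m => by rw [Nat.odd_iff]; omega]

lemma parityLevel_le (P : AltSeq g) (hf : g.unmatched (P.w 0)) {k : ℕ} (hk : k ≤ P.n) :
    g.parityLevel k (P.w k) ≤ k := by
  rw [parityLevel_eq_sInf]
  exact sInf_le ⟨P.trunc k hk, hf, rfl, rfl, rfl⟩

lemma exists_altSeq_of_parityLevel_ne_top {r : ℕ} {u : V} (h : g.parityLevel r u ≠ ⊤) :
    ∃ P : AltSeq g, g.unmatched (P.w 0) ∧ P.w P.n = u ∧ P.n % 2 = r % 2 ∧
      (P.n : ℕ∞) = g.parityLevel r u := by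
  rw [parityLevel_eq_sInf] at h ⊢
  obtain ⟨n, hn, -⟩ := not_forall₂.mp (mt sInf_eq_top.mpr h)
  obtain ⟨P, hf, hu, hpar, hP⟩ := csInf_mem ⟨n, hn⟩
  exact ⟨P, hf, hu, hpar, hP.symm⟩

lemma tenacity_eq_parityLevel_add {r s : ℕ} (h : (r + s) % 2 = 1) (u : V) :
    g.tenacity u = g.parityLevel r u + g.parityLevel s u := by
  unfold tenacity parityLevel
  split_ifs <;> first | omega | rfl | exact add_comm _ _

lemma minlevel_eq_min_parityLevel {r s : ℕ} (h : (r + s) % 2 = 1) (u : V) :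
    g.minlevel u = min (g.parityLevel r u) (g.parityLevel s u) := by
  unfold minlevel parityLevel
  split_ifs <;> first | omega | rfl | exact min_comm _ _

lemma minlevel_le_parityLevel (r : ℕ) (u : V) : g.minlevel u ≤ g.parityLevel r u := by
  unfold minlevel parityLevel
  split_ifs
  exacts [min_le_left _ _, min_le_right _ _]

lemma lm_le_oddlevel_of_unmatched {f : V} (hf : g.unmatched f) : g.lm ≤ g.oddlevel f := by
  refine le_sInf ?_
  rintro _ ⟨p, f', ⟨hf', hp⟩, hodd, rfl⟩
  refine sInf_le ⟨p, f', f, ⟨hf', hp⟩, hf, ?_, rfl⟩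
  rintro rfl
  obtain ⟨P, hn, -, h0, hend⟩ := AltSeq.exists_of_altPath hp
  have hpos : 0 < P.n := by
    obtain ⟨k, hk⟩ := hodd
    omega
  exact P.w_ne_w_n hpos (h0.trans hend.symm)

/-- `P` is an `evenlevel` or `oddlevel` path of its endpoint. -/
structure IsLevelPath (P : AltSeq g) : Prop where
  unmatched : g.unmatched (P.w 0)
  length_eq : (P.n : ℕ∞) = g.parityLevel P.n (P.w P.n)

/-- `P.w i` is the vertex `F(P, P.w P.n)` of the paper. -/
structure AltSeq.IsLastAbove (P : AltSeq g) (i : ℕ) : Prop where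
  le_n : i ≤ P.n
  lt_tenacity : g.tenacity (P.w P.n) < g.tenacity (P.w i)
  tenacity_le : ∀ k, i < k → k ≤ P.n → g.tenacity (P.w k) ≤ g.tenacity (P.w P.n)

namespace AltSeq

variable {P : AltSeq g} {i : ℕ}

lemma IsLastAbove.le_of_lt_tenacity (h : P.IsLastAbove i) {k : ℕ} (hk : k ≤ P.n)
    (ht : g.tenacity (P.w P.n) < g.tenacity (P.w k)) : k ≤ i :=
  not_lt.1 fun hik => (h.tenacity_le k hik hk).not_gt ht

lemma IsLastAbove.trunc (h : P.IsLastAbove i) {a : ℕ} (ha : a ≤ P.n) (hia : i ≤ a)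
    (hten : g.tenacity (P.w a) = g.tenacity (P.w P.n)) : (P.trunc a ha).IsLastAbove i :=
  ⟨hia, hten ▸ h.lt_tenacity, fun k hik hk => hten ▸ h.tenacity_le k hik (hk.trans ha)⟩

lemma exists_isLastAbove (P : AltSeq g) (h : g.tenacity (P.w P.n) < g.tenacity (P.w 0)) :
    ∃ i, P.IsLastAbove i := by
  let above k := g.tenacity (P.w P.n) < g.tenacity (P.w k)
  refine ⟨Nat.findGreatest above P.n, Nat.findGreatest_le _,
    Nat.findGreatest_spec (P := above) (Nat.zero_le _) h, fun k hk hkn => ?_⟩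
  exact not_lt.1 (Nat.findGreatest_is_greatest hk hkn)

end AltSeq

lemma exists_isLevelPath_isLastAbove {v : V} (hlm : g.tenacity v < g.lm) (r : ℕ) :
    ∃ (P : AltSeq g) (i : ℕ), g.IsLevelPath P ∧ P.w P.n = v ∧ P.n % 2 = r % 2 ∧
      P.IsLastAbove i := by
  have hne : g.parityLevel r v ≠ ⊤ := ne_top_of_le_ne_top hlm.ne_top <| by
    rw [tenacity_eq_parityLevel_add (r := r) (s := r + 1) (by omega)]
    exact le_self_add
  obtain ⟨P, hf, hv, hpar, hP⟩ := exists_altSeq_of_parityLevel_ne_top hne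
  obtain ⟨i, hi⟩ := P.exists_isLastAbove <|
    hv ▸ hlm.trans_le ((lm_le_oddlevel_of_unmatched hf).trans le_add_self)
  exact ⟨P, i, ⟨hf, by rw [hv, parityLevel_congr hpar]; exact hP⟩, hv, hpar, hi⟩

lemma isEvenlevelPath_or_isOddlevelPath_iff {p : List V} {f v : V} :
    g.IsEvenlevelPath p f v ∨ g.IsOddlevelPath p f v ↔
      g.AltPathFrom p f v ∧ ((p.length - 1 : ℕ) : ℕ∞) = g.parityLevel (p.length - 1) v := by
  unfold IsEvenlevelPath IsOddlevelPath parityLevel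
  rcases Nat.mod_two_eq_zero_or_one (p.length - 1) with h | h <;>
    simp [h, Nat.even_iff, Nat.odd_iff]

lemma mem_Bset_iff {v b : V} : b ∈ g.Bset v ↔
    ∃ (P : AltSeq g) (i : ℕ), g.IsLevelPath P ∧ P.w P.n = v ∧ P.IsLastAbove i ∧ P.w i = b := by
  constructor
  · rintro ⟨p, f, i, hlevel, hi, rfl, hlt, hall⟩
    obtain ⟨⟨hf, hp⟩, hl⟩ := isEvenlevelPath_or_isOddlevelPath_iff.1 hlevel
    obtain ⟨P, hn, hw, h0, hend⟩ := AltSeq.exists_of_altPath hp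
    have hn' : P.n = p.length - 1 := by omega
    refine ⟨P, i, ⟨h0 ▸ hf, by rw [hend, hn']; exact hl⟩, hend,
      ⟨by omega, ?_, fun k hik hk => ?_⟩, hw i⟩
    · rwa [hend, hw]
    · rw [hend, hw]
      exact hall k hik (by omega)
  · rintro ⟨P, i, ⟨hf, hl⟩, rfl, ⟨hi, hlt, hall⟩, rfl⟩
    refine ⟨P.toList, P.w 0, i, isEvenlevelPath_or_isOddlevelPath_iff.2 ?_, by simp; omega,
      (P.getD_toList hi _).symm, hlt, fun k hik hk => ?_⟩
    · exact ⟨⟨hf, P.altPath_toList⟩, by simpa using hl⟩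
    · simp only [AltSeq.length_toList] at hk
      rw [P.getD_toList (by omega)]
      exact hall k hik (by omega)

lemma tenacity_le_of_w_eq (P Q : AltSeq g) (hP : g.unmatched (P.w 0)) (hQ : g.unmatched (Q.w 0))
    {x y : ℕ} (hx : x ≤ P.n) (hy : y ≤ Q.n) (heq : P.w x = Q.w y) (hpar : (x + y) % 2 = 1) :
    g.tenacity (P.w x) ≤ (x + y : ℕ) := by
  calc g.tenacity (P.w x) = g.parityLevel x (P.w x) + g.parityLevel y (Q.w y) := by
        rw [← heq]; exact tenacity_eq_parityLevel_add hpar _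
    _ ≤ (x + y : ℕ) := by
        push_cast; exact add_le_add (parityLevel_le P hP hx) (parityLevel_le Q hQ hy)

lemma mod_two_eq_of_w_eq (P Q : AltSeq g) (hP : g.unmatched (P.w 0)) (hQ : g.unmatched (Q.w 0))
    {x y : ℕ} (hx : x ≤ P.n) (hy : y ≤ Q.n) (heq : P.w x = Q.w y)
    (hlt : ((x + y : ℕ) : ℕ∞) < g.tenacity (P.w x)) : x % 2 = y % 2 := by
  by_contra hpar
  exact (tenacity_le_of_w_eq P Q hP hQ hx hy heq (by omega)).not_gt hlt

lemma exists_splice (P Q : AltSeq g) {a c : ℕ} (ha : a ≤ P.n) (hc : c ≤ Q.n)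
    (hj : P.w a = Q.w c) (hpar : a % 2 = c % 2)
    (hdisj : ∀ x ≤ a, ∀ z, c < z → z ≤ Q.n → P.w x ≠ Q.w z) :
    ∃ R : AltSeq g, R.n = a + (Q.n - c) ∧ R.w 0 = P.w 0 ∧ R.w R.n = Q.w Q.n := by
  let w i := if i ≤ a then P.w i else Q.w (i - a + c)
  have hp : ∀ i ≤ a, w i = P.w i := fun i hi => if_pos hi
  have hq : ∀ i, a ≤ i → w i = Q.w (i - a + c) := fun i hi => by
    rcases hi.eq_or_lt with rfl | hi
    · simpa [w] using hj
    · exact if_neg (not_le.2 hi)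
  refine ⟨⟨a + (Q.n - c), w, fun i j hi hj heq => ?_, fun i hi => ?_⟩, rfl,
    hp 0 (Nat.zero_le _), (hq (a + (Q.n - c)) (by omega)).trans (congrArg Q.w (by omega))⟩
  · rcases le_or_gt i a with hia | hia <;> rcases le_or_gt j a with hja | hja
    · rw [hp i hia, hp j hja] at heq
      exact P.inj (hia.trans ha) (hja.trans ha) heq
    · rw [hp i hia, hq j hja.le] at heq
      exact absurd heq (hdisj i hia _ (by omega) (by omega))
    · rw [hq i hia.le, hp j hja] at heq
      exact absurd heq.symm (hdisj j hja _ (by omega) (by omega))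
    · rw [hq i hia.le, hq j hja.le] at heq
      have := Q.inj (by omega) (by omega) heq
      omega
  · rcases le_or_gt (i + 1) a with hia | hia
    · rw [hp i (by omega), hp (i + 1) hia]
      exact P.alt i (hia.trans ha)
    · rw [hq i (by omega), hq (i + 1) (by omega), show i + 1 - a + c = i - a + c + 1 by omega]
      have := Q.alt (i - a + c) (by omega)
      exact ⟨this.1, this.2.trans (by omega)⟩

lemma exists_splice_reverse (P Q : AltSeq g) (hv : P.w P.n = Q.w Q.n) {m : ℕ} (hm : m ≤ Q.n)
    (hpar : (P.n + Q.n) % 2 = 1)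
    (hdisj : ∀ x ≤ P.n, ∀ z, m ≤ z → z < Q.n → P.w x ≠ Q.w z) :
    ∃ R : AltSeq g, R.n = P.n + (Q.n - m) ∧ R.w 0 = P.w 0 ∧ R.w R.n = Q.w m := by
  let w i := if i ≤ P.n then P.w i else Q.w (Q.n - (i - P.n))
  have hp : ∀ i ≤ P.n, w i = P.w i := fun i hi => if_pos hi
  have hq : ∀ i, P.n ≤ i → w i = Q.w (Q.n - (i - P.n)) := fun i hi => by
    rcases hi.eq_or_lt with rfl | hi
    · simpa [w] using hv
    · exact if_neg (not_le.2 hi)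
  refine ⟨⟨P.n + (Q.n - m), w, fun i j hi hj heq => ?_, fun i hi => ?_⟩, rfl,
    hp 0 (Nat.zero_le _), (hq (P.n + (Q.n - m)) (by omega)).trans (congrArg Q.w (by omega))⟩
  · rcases le_or_gt i P.n with hia | hia <;> rcases le_or_gt j P.n with hja | hja
    · rw [hp i hia, hp j hja] at heq
      exact P.inj hia hja heq
    · rw [hp i hia, hq j hja.le] at heq
      exact absurd heq (hdisj i hia _ (by omega) (by omega))
    · rw [hq i hia.le, hp j hja] at heq
      exact absurd heq.symm (hdisj j hja _ (by omega) (by omega))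
    · rw [hq i hia.le, hq j hja.le] at heq
      have := Q.inj (by omega) (by omega) heq
      omega
  · rcases le_or_gt (i + 1) P.n with hia | hia
    · rw [hp i (by omega), hp (i + 1) hia]
      exact P.alt i hia
    · set k := Q.n - (i + 1 - P.n) with hk
      rw [hq i (by omega), hq (i + 1) (by omega), show Q.n - (i - P.n) = k + 1 by omega]
      have := Q.alt k (by omega)
      refine ⟨g.symm _ _ this.1, (Iff.intro (g.M_symm _ _) (g.M_symm _ _)).trans
        (this.2.trans ?_)⟩
      omega

/-- A level path `Q` cannot be shortcut by leaving it at `y` along a path whose prefix up to `x`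
avoids the rest of `Q`. -/
lemma IsLevelPath.le_of_w_eq {Q : AltSeq g} (hQ : g.IsLevelPath Q) (S : AltSeq g)
    (hS : g.unmatched (S.w 0)) {x y : ℕ} (hx : x ≤ S.n) (hy : y ≤ Q.n) (heq : S.w x = Q.w y)
    (hpar : x % 2 = y % 2) (hdisj : ∀ x' ≤ x, ∀ z, y < z → z ≤ Q.n → S.w x' ≠ Q.w z) :
    y ≤ x := by
  obtain ⟨R, hRn, hR0, hRe⟩ := exists_splice S Q hx hy heq hpar hdisj
  have := parityLevel_le R (hR0 ▸ hS) le_rfl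
  rw [hRe, parityLevel_congr (show R.n % 2 = Q.n % 2 by omega), ← hQ.length_eq, Nat.cast_le] at this
  omega

lemma exists_w_eq_of_lt_tenacity (P Q : AltSeq g) (hP : g.unmatched (P.w 0))
    (hQ : g.unmatched (Q.w 0)) (hv : P.w P.n = Q.w Q.n) (hpar : (P.n + Q.n) % 2 = 1) {m : ℕ}
    (hm : m ≤ Q.n) (hten : ((P.n + Q.n : ℕ) : ℕ∞) < g.tenacity (Q.w m)) :
    ∃ j ≤ P.n, ∃ k, m ≤ k ∧ k < Q.n ∧ P.w j = Q.w k := by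
  -- otherwise `P` followed by `Q` backwards is a path to `Q.w m` of parity opposite to `m`
  by_contra! hdisj
  obtain ⟨R, hRn, hR0, hRe⟩ := exists_splice_reverse P Q hv hm hpar hdisj
  have := tenacity_le_of_w_eq R Q (hR0 ▸ hP) hQ le_rfl hm hRe (by omega)
  rw [hRe, hRn, show P.n + (Q.n - m) + m = P.n + Q.n by omega] at this
  exact this.not_gt hten

structure LevelPair (g : MatchedGraph V) (v : V) where
  P : AltSeq g
  Q : AltSeq g
  isLevelPath_P : g.IsLevelPath P
  isLevelPath_Q : g.IsLevelPath Q
  P_end : P.w P.n = v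
  Q_end : Q.w Q.n = v
  odd_add : (P.n + Q.n) % 2 = 1

namespace LevelPair

variable {v : V} (C : g.LevelPair v)

def swap : g.LevelPair v :=
  ⟨C.Q, C.P, C.isLevelPath_Q, C.isLevelPath_P, C.Q_end, C.P_end,
    (add_comm C.Q.n C.P.n).symm ▸ C.odd_add⟩

lemma tenacity_P_end : g.tenacity (C.P.w C.P.n) = g.tenacity v := congrArg _ C.P_end

lemma tenacity_Q_end : g.tenacity (C.Q.w C.Q.n) = g.tenacity v := congrArg _ C.Q_end

lemma parityLevel_P : g.parityLevel C.P.n v = C.P.n :=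
  (C.P_end ▸ C.isLevelPath_P.length_eq).symm

lemma parityLevel_Q : g.parityLevel C.Q.n v = C.Q.n :=
  C.swap.parityLevel_P

lemma tenacity_eq : g.tenacity v = (C.P.n + C.Q.n : ℕ) := by
  rw [tenacity_eq_parityLevel_add C.odd_add, C.parityLevel_P, C.parityLevel_Q, Nat.cast_add]

lemma minlevel_eq : g.minlevel v = min (C.P.n : ℕ∞) C.Q.n := by
  rw [minlevel_eq_min_parityLevel C.odd_add, C.parityLevel_P, C.parityLevel_Q]

structure Aligned (k : ℕ) : Prop where
  lt_P : k < C.P.n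
  lt_Q : k < C.Q.n
  w_eq : C.P.w k = C.Q.w k

variable (hmin : ∀ u, g.tenacity v ≤ g.tenacity u)
include hmin

lemma mod_two_eq_of_w_eq (S : AltSeq g) (hS : g.unmatched (S.w 0)) {x y : ℕ} (hx : x ≤ S.n)
    (hy : y ≤ C.Q.n) (heq : S.w x = C.Q.w y) (hlt : x + y < C.P.n + C.Q.n) : x % 2 = y % 2 :=
  MatchedGraph.mod_two_eq_of_w_eq S C.Q hS C.isLevelPath_Q.unmatched hx hy heq <|
    (Nat.cast_lt.2 hlt).trans_le (C.tenacity_eq ▸ hmin _)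

lemma le_of_w_eq {a c : ℕ} (ha : a < C.P.n) (hc : c ≤ C.Q.n) (heq : C.P.w a = C.Q.w c) :
    c ≤ a := by
  -- the first crossing `P.w a₀ = Q.w c₀` with `a₀ < c₀` would let `P` shortcut `Q`
  by_contra! hac
  have hex : ∃ a, a < C.P.n ∧ ∃ c ≤ C.Q.n, a < c ∧ C.P.w a = C.Q.w c := ⟨a, ha, c, hc, hac, heq⟩
  obtain ⟨ha₀, c₀, hc₀, hac₀, heq₀⟩ := Nat.find_spec hex
  have hpar := C.mod_two_eq_of_w_eq hmin C.P C.isLevelPath_P.unmatched ha₀.le hc₀ heq₀ (by omega)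
  refine (C.isLevelPath_Q.le_of_w_eq C.P C.isLevelPath_P.unmatched ha₀.le hc₀ heq₀ hpar ?_).not_gt
    hac₀
  intro x hx z hz hzQ hxz
  have := Nat.find_min' hex ⟨by omega, z, hzQ, by omega, hxz⟩
  have := C.Q.inj hzQ hc₀ (hxz.symm.trans ((show x = Nat.find hex by omega) ▸ heq₀))
  omega

lemma eq_of_w_eq {a c : ℕ} (ha : a < C.P.n) (hc : c ≤ C.Q.n) (heq : C.P.w a = C.Q.w c) :
    a = c := by
  have hcQ : c < C.Q.n := hc.lt_of_ne fun h => C.P.w_ne_w_n ha (by rw [heq, h, C.Q_end, C.P_end])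
  exact le_antisymm (C.swap.le_of_w_eq hmin hcQ ha.le heq.symm) (C.le_of_w_eq hmin ha hc heq)

lemma exists_aligned_ge {m : ℕ} (hm : m ≤ C.Q.n)
    (hten : g.tenacity v < g.tenacity (C.Q.w m)) : ∃ k, m ≤ k ∧ C.Aligned k := by
  obtain ⟨j, hj, k, hmk, hk, heq⟩ := exists_w_eq_of_lt_tenacity C.P C.Q
    C.isLevelPath_P.unmatched C.isLevelPath_Q.unmatched (C.P_end.trans C.Q_end.symm) C.odd_add hm
    (C.tenacity_eq ▸ hten)
  have hjP : j < C.P.n :=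
    hj.lt_of_ne fun h => C.Q.w_ne_w_n hk (by rw [← heq, h, C.P_end, C.Q_end])
  obtain rfl := C.eq_of_w_eq hmin hjP hk.le heq
  exact ⟨j, hmk, hjP, hk, heq⟩

lemma le_of_altSeq_to_aligned {k : ℕ} (hk : C.Aligned k) (S : AltSeq g)
    (hS : g.unmatched (S.w 0)) (hSk : S.w S.n = C.P.w k) : k ≤ S.n := by
  -- the last vertex of `Q` beyond `k` that `S` meets would let `S` shortcut `Q`
  by_contra! hlt
  let onS y := k ≤ y ∧ ∃ x ≤ S.n, S.w x = C.Q.w y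
  have hy := Nat.findGreatest_le (P := onS) C.Q.n
  obtain ⟨hky, x, hx, hxy⟩ :=
    Nat.findGreatest_spec (P := onS) hk.lt_Q.le ⟨le_rfl, S.n, le_rfl, hSk.trans hk.w_eq⟩
  have hpar := C.mod_two_eq_of_w_eq hmin S hS hx hy hxy (by have := hk.lt_P; omega)
  have := C.isLevelPath_Q.le_of_w_eq S hS hx hy hxy hpar fun x' hx' z hyz hz hxz =>
    Nat.findGreatest_is_greatest hyz hz ⟨by omega, x', by omega, hxz⟩
  omega

lemma parityLevel_aligned {k : ℕ} (hk : C.Aligned k) : g.parityLevel k (C.P.w k) = k := by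
  refine le_antisymm (parityLevel_le C.P C.isLevelPath_P.unmatched hk.lt_P.le) ?_
  rw [parityLevel_eq_sInf]
  refine le_sInf ?_
  rintro _ ⟨S, hS, hSk, -, rfl⟩
  exact Nat.cast_le.2 (C.le_of_altSeq_to_aligned hmin hk S hS hSk)

lemma exists_aligned_ge_of_isLastAbove {i j : ℕ} (hi : C.P.IsLastAbove i)
    (hj : C.Q.IsLastAbove j) : ∃ a, i ≤ a ∧ j ≤ a ∧ C.Aligned a := by
  obtain ⟨k₁, hjk, hk₁⟩ := C.exists_aligned_ge hmin hj.le_n (C.tenacity_Q_end ▸ hj.lt_tenacity)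
  obtain ⟨k₂, hik, hk₂, hk₂', heq⟩ :=
    C.swap.exists_aligned_ge hmin hi.le_n (C.tenacity_P_end ▸ hi.lt_tenacity)
  rcases le_total k₁ k₂ with h | h
  · exact ⟨k₂, hik, hjk.trans h, hk₂', hk₂, heq.symm⟩
  · exact ⟨k₁, hik.trans h, hjk, hk₁⟩

theorem w_eq_of_isLastAbove
    (ih : ∀ u, g.minlevel u < g.minlevel v → g.tenacity u = g.tenacity v →
      (g.Bset u).Subsingleton)
    {i j : ℕ} (hi : C.P.IsLastAbove i) (hj : C.Q.IsLastAbove j) : C.P.w i = C.Q.w j := by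
  obtain ⟨a, hia, hja, ha⟩ := C.exists_aligned_ge_of_isLastAbove hmin hi hj
  by_cases hcand : i = a ∨ j = a
  · -- then `P.w a` has tenacity above `t`, so it is the last such vertex on both paths
    have hten : g.tenacity v < g.tenacity (C.P.w a) := by
      rcases hcand with rfl | rfl
      exacts [C.tenacity_P_end ▸ hi.lt_tenacity, ha.w_eq ▸ C.tenacity_Q_end ▸ hj.lt_tenacity]
    have hai := hi.le_of_lt_tenacity ha.lt_P.le (C.tenacity_P_end ▸ hten)
    have haj := hj.le_of_lt_tenacity ha.lt_Q.le (C.tenacity_Q_end ▸ ha.w_eq ▸ hten)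
    obtain rfl : i = a := by omega
    obtain rfl : j = i := by omega
    exact ha.w_eq
  push Not at hcand
  have hten : g.tenacity (C.P.w a) = g.tenacity v :=
    le_antisymm (C.tenacity_P_end ▸ hi.tenacity_le a (by omega) ha.lt_P.le) (hmin _)
  have hlevel := C.parityLevel_aligned hmin ha
  have hlevel' : g.parityLevel a (C.Q.w a) = a := ha.w_eq ▸ hlevel
  have hminlevel : g.minlevel (C.P.w a) < g.minlevel v := by
    rw [C.minlevel_eq]
    refine (minlevel_le_parityLevel a _).trans_lt ?_
    rw [hlevel]
    exact lt_min (Nat.cast_lt.2 ha.lt_P) (Nat.cast_lt.2 ha.lt_Q)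
  refine ih _ hminlevel hten
    (mem_Bset_iff.2 ⟨C.P.trunc a ha.lt_P.le, i,
      ⟨C.isLevelPath_P.unmatched, hlevel.symm⟩, rfl,
      hi.trunc ha.lt_P.le hia (hten.trans C.tenacity_P_end.symm), rfl⟩)
    (mem_Bset_iff.2 ⟨C.Q.trunc a ha.lt_Q.le, j,
      ⟨C.isLevelPath_Q.unmatched, hlevel'.symm⟩, ha.w_eq.symm,
      hj.trunc ha.lt_Q.le hja (ha.w_eq ▸ hten.trans C.tenacity_Q_end.symm), rfl⟩)

end LevelPair

theorem Bset_subsingleton (v : V) (hmin : ∀ u, g.tenacity v ≤ g.tenacity u)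
    (hlm : g.tenacity v < g.lm) : (g.Bset v).Subsingleton := by
  induction v using (InvImage.wf g.minlevel wellFounded_lt).induction with
  | _ v ih =>
  have hbase : ∀ {P Q : AltSeq g} {i j : ℕ}, g.IsLevelPath P → g.IsLevelPath Q → P.w P.n = v →
      Q.w Q.n = v → (P.n + Q.n) % 2 = 1 → P.IsLastAbove i → Q.IsLastAbove j → P.w i = Q.w j :=
    fun hP hQ hPv hQv hpar hi hj => LevelPair.w_eq_of_isLastAbove ⟨_, _, hP, hQ, hPv, hQv, hpar⟩
      hmin (fun u hu hten => ih u hu (hten ▸ hmin) (hten ▸ hlm)) hi hj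
  rintro _ hb₁ _ hb₂
  obtain ⟨P₁, i₁, hP₁, hP₁v, hi₁, rfl⟩ := mem_Bset_iff.1 hb₁
  obtain ⟨P₂, i₂, hP₂, hP₂v, hi₂, rfl⟩ := mem_Bset_iff.1 hb₂
  rcases Nat.mod_two_eq_zero_or_one (P₁.n + P₂.n) with hpar | hpar
  · obtain ⟨Q, j, hQ, hQv, hQpar, hj⟩ := exists_isLevelPath_isLastAbove hlm (P₁.n + 1)
    exact (hbase hP₁ hQ hP₁v hQv (by omega) hi₁ hj).trans
      (hbase hP₂ hQ hP₂v hQv (by omega) hi₂ hj).symm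
  · exact hbase hP₁ hP₂ hP₁v hP₂v hpar hi₁ hi₂

theorem Bset_nonempty {v : V} (hlm : g.tenacity v < g.lm) : (g.Bset v).Nonempty := by
  obtain ⟨P, i, hP, hv, -, hi⟩ := exists_isLevelPath_isLastAbove hlm 0
  exact ⟨_, mem_Bset_iff.2 ⟨P, i, hP, hv, hi, rfl⟩⟩

end MatchedGraph

/-- Every vertex `v` of minimum tenacity `t_m` has a well-defined
base: the set `B(v)` is a singleton, provided `t_m < l_m`. -/
theorem Bset_singleton_of_min_tenacity (g : MatchedGraph V) (v : V)
    (h1 : g.tenacity v = g.tm) (h2 : g.tm < g.lm) :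
    ∃ b, g.Bset v = {b} := by
  have hlm : g.tenacity v < g.lm := h1 ▸ h2
  exact Set.exists_eq_singleton_iff_nonempty_subsingleton.2
    ⟨g.Bset_nonempty hlm, g.Bset_subsingleton v (fun u => h1 ▸ iInf_le _ u) hlm⟩
end

section
/- Let v be a vertex of minimum tenacity t_m < l_m. Then every maxlevel(v) path contains a unique bridge of tenacity t_m. -/
open scoped Classical

universe u

variable {V : Type u}

/-!
Let `u` be the maxlevel path, of length `L = level_L(v)`, and `s = level_{L+1}(v) < L`, so that
`tm = L + s`. Let `r + 1` be the first position of `u` whose minlevel is smaller than the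
position. Up to `r` every prefix of `u` is a minlevel path, so the edges before `r` are props.
A shortest path `q` to `v` cannot meet `u` strictly between `r` and `L`: at the last meeting
point, either following `u` gives a path to `v` shorter than `L` of the same parity, or the two
paths to the meeting point have tenacity below `L + s`. Hence `q` followed by `u` backwards is a
path of length `L + s - i` to `u i` for `i > r`; comparing with `tm` shows that both levels of
`u i` are realized by `u` and by this path, so the edges after `r` are props as well. The edge
`(u r, u (r + 1))` has tenacity `r + (L + s - r - 1) + 1 = tm`, and the parity of its matching
status forbids it to be the last edge of a minlevel path to either endpoint.
-/

lemma List.getD_map_range {α : Type*} (w : ℕ → α) {n i : ℕ} (hi : i ≤ n) (d : α) :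
    ((List.range (n + 1)).map w).getD i d = w i := by
  simp [List.getD_eq_getElem?_getD, List.getElem?_range (by omega : i < n + 1)]

lemma ENat.coe_mem_of_sInf_eq {S : Set ℕ∞} {n : ℕ} (h : sInf S = n) : (n : ℕ∞) ∈ S := by
  have hne : S.Nonempty := Set.nonempty_iff_ne_empty.2 fun hS => by
    rw [hS, sInf_empty] at h
    exact ENat.top_ne_natCast n h
  exact h ▸ csInf_mem hne

namespace MatchedGraph

variable {g : MatchedGraph V}

/-- `w 0, …, w n` is a simple alternating path from an unmatched vertex, indexed by position. -/
structure IsAltSeq (g : MatchedGraph V) (w : ℕ → V) (n : ℕ) : Prop where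
  unmatched_zero : g.unmatched (w 0)
  adj : ∀ i < n, g.adj (w i) (w (i + 1))
  matched_iff : ∀ i < n, g.M (w i) (w (i + 1)) ↔ i % 2 = 1
  injOn : Set.InjOn w (Set.Iic n)

namespace IsAltSeq

variable {w : ℕ → V} {n : ℕ}

lemma mono (hw : g.IsAltSeq w n) {m : ℕ} (hmn : m ≤ n) : g.IsAltSeq w m :=
  ⟨hw.unmatched_zero, fun i hi => hw.adj i (by omega), fun i hi => hw.matched_iff i (by omega),
    hw.injOn.mono (Set.Iic_subset_Iic.2 hmn)⟩

lemma altPathFrom (hw : g.IsAltSeq w n) :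
    g.AltPathFrom ((List.range (n + 1)).map w) (w 0) (w n) := by
  refine ⟨hw.unmatched_zero, by simp [List.head?_range], ?_, ?_, fun i hi => ?_⟩
  · simp [List.getLast?_eq_getElem?]
  · exact List.nodup_range.map_on fun a ha b hb hab =>
      hw.injOn (Set.mem_Iic.2 (by simp at ha; omega)) (Set.mem_Iic.2 (by simp at hb; omega)) hab
  · simp only [List.length_map, List.length_range] at hi
    rw [List.getD_map_range w (by omega), List.getD_map_range w (by omega)]
    exact ⟨hw.adj i (by omega), hw.matched_iff i (by omega)⟩

end IsAltSeq

lemma AltPathFrom.isAltSeq {p : List V} {f x : V} (h : g.AltPathFrom p f x) :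
    g.IsAltSeq (fun i => p.getD i f) (p.length - 1) ∧ p.getD (p.length - 1) f = x := by
  obtain ⟨hf, hhead, hlast, hnodup, halt⟩ := h
  have hlen : 0 < p.length := List.length_pos_iff.2 (by rintro rfl; simp at hhead)
  refine ⟨⟨?_, fun i hi => (halt i (by omega)).1, fun i hi => (halt i (by omega)).2, ?_⟩,
    ?_⟩
  · rw [List.head?_eq_getElem?, List.getElem?_eq_getElem hlen] at hhead
    rwa [List.getD_eq_getElem _ _ hlen, Option.some_injective _ hhead]
  · intro a ha b hb hab
    simp only [Set.mem_Iic] at ha hb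
    dsimp only at hab
    rw [List.getD_eq_getElem _ _ (by omega), List.getD_eq_getElem _ _ (by omega)] at hab
    exact (hnodup.getElem_inj_iff).1 hab
  · rw [List.getD_eq_getElem _ _ (by omega), ← Option.some_inj, ← List.getElem?_eq_getElem,
      ← List.getLast?_eq_getElem?, hlast]

noncomputable def level (g : MatchedGraph V) (k : ℕ) (x : V) : ℕ∞ :=
  if k % 2 = 0 then g.evenlevel x else g.oddlevel x

lemma level_congr {k k' : ℕ} (h : k % 2 = k' % 2) (x : V) : g.level k x = g.level k' x := by
  simp only [level, h]

lemma tenacity_eq_level_add_level_succ (k : ℕ) (x : V) :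
    g.tenacity x = g.level k x + g.level (k + 1) x := by
  rcases Nat.mod_two_eq_zero_or_one k with h | h <;>
    simp [level, tenacity, h, Nat.succ_mod_two_eq_zero_iff, add_comm]

lemma minlevel_eq_min_level (k : ℕ) (x : V) :
    g.minlevel x = min (g.level k x) (g.level (k + 1) x) := by
  rcases Nat.mod_two_eq_zero_or_one k with h | h <;>
    simp [level, minlevel, h, Nat.succ_mod_two_eq_zero_iff, min_comm]

lemma maxlevel_eq_max_level (k : ℕ) (x : V) :
    g.maxlevel x = max (g.level k x) (g.level (k + 1) x) := by
  rcases Nat.mod_two_eq_zero_or_one k with h | h <;>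
    simp [level, maxlevel, h, Nat.succ_mod_two_eq_zero_iff, max_comm]

lemma etenacity_eq_level {x y : V} {k : ℕ} (h : g.M x y ↔ k % 2 = 1) :
    g.etenacity x y = g.level k x + g.level k y + 1 := by
  rcases Nat.mod_two_eq_zero_or_one k with hk | hk <;> simp [etenacity, level, h, hk]

lemma tm_le_tenacity (x : V) : g.tm ≤ g.tenacity x := iInf_le _ x

lemma IsAltSeq.level_le {w : ℕ → V} {n : ℕ} (hw : g.IsAltSeq w n) :
    g.level n (w n) ≤ n := by
  unfold level evenlevel oddlevel
  split_ifs with h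
  · exact sInf_le ⟨_, _, hw.altPathFrom, by simpa [Nat.even_iff] using h, by simp⟩
  · exact sInf_le ⟨_, _, hw.altPathFrom, by simpa [Nat.odd_iff] using h, by simp⟩

lemma exists_isAltSeq_of_level_eq {k n : ℕ} {x : V} (h : g.level k x = n) :
    ∃ w, g.IsAltSeq w n ∧ w n = x ∧ n % 2 = k % 2 := by
  unfold level evenlevel oddlevel at h
  split_ifs at h with hk
  all_goals
    obtain ⟨p, f, hpf, hpar, hlen⟩ := ENat.coe_mem_of_sInf_eq h
    obtain rfl : n = p.length - 1 := by exact_mod_cast hlen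
    obtain ⟨hw, hx⟩ := hpf.isAltSeq
  · exact ⟨_, hw, hx, by rw [hk]; exact Nat.even_iff.1 hpar⟩
  · exact ⟨_, hw, hx, by rw [Nat.odd_iff.1 hpar]; omega⟩

lemma mod_two_eq_of_level_eq {k n : ℕ} {x : V} (h : g.level k x = n) : n % 2 = k % 2 :=
  (exists_isAltSeq_of_level_eq h).choose_spec.2.2

lemma tenacity_le_add {w w' : ℕ → V} {a b : ℕ} {x : V} (hw : g.IsAltSeq w a)
    (hw' : g.IsAltSeq w' b) (hx : w a = x) (hx' : w' b = x) (hab : a % 2 ≠ b % 2) :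
    g.tenacity x ≤ (a + b : ℕ) := by
  rw [tenacity_eq_level_add_level_succ a, level_congr (k := a + 1) (k' := b) (by omega),
    Nat.cast_add]
  exact add_le_add (hx ▸ hw.level_le) (hx' ▸ hw'.level_le)

namespace IsAltSeq

variable {u q : ℕ → V} {L j : ℕ}

lemma append (hq : g.IsAltSeq q j) {c : ℕ → V} {m : ℕ} (hc0 : c 0 = q j)
    (hadj : ∀ i < m, g.adj (c i) (c (i + 1)))
    (hM : ∀ i < m, g.M (c i) (c (i + 1)) ↔ (j + i) % 2 = 1)
    (hinj : Set.InjOn c (Set.Iic m))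
    (havoid : ∀ a, 0 < a → a ≤ m → ∀ k ≤ j, c a ≠ q k) :
    g.IsAltSeq (fun a => if a ≤ j then q a else c (a - j)) (j + m) := by
  set w : ℕ → V := fun a => if a ≤ j then q a else c (a - j)
  have hlo : ∀ a ≤ j, w a = q a := fun a ha => if_pos ha
  have hhi : ∀ a, j ≤ a → w a = c (a - j) := fun a ha => by
    rcases ha.eq_or_lt with rfl | ha
    · simp [w, hc0]
    · exact if_neg (by omega)
  refine ⟨by simpa [hlo 0 (Nat.zero_le j)] using hq.unmatched_zero, fun i hi => ?_,
    fun i hi => ?_, fun a ha b hb hab => ?_⟩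
  · rcases Nat.lt_or_ge i j with h | h
    · rw [hlo i h.le, hlo (i + 1) h]; exact hq.adj i h
    · rw [hhi i h, hhi (i + 1) (by omega), Nat.sub_add_comm h]; exact hadj _ (by omega)
  · rcases Nat.lt_or_ge i j with h | h
    · rw [hlo i h.le, hlo (i + 1) h]; exact hq.matched_iff i h
    · rw [hhi i h, hhi (i + 1) (by omega), Nat.sub_add_comm h, hM _ (by omega),
        Nat.add_sub_cancel' h]
  · simp only [Set.mem_Iic] at ha hb
    rcases le_or_gt a j with h1 | h1 <;> rcases le_or_gt b j with h2 | h2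
    · rw [hlo a h1, hlo b h2] at hab
      exact hq.injOn (Set.mem_Iic.2 h1) (Set.mem_Iic.2 h2) hab
    · rw [hlo a h1, hhi b h2.le] at hab
      exact absurd hab.symm (havoid _ (by omega) (by omega) a h1)
    · rw [hhi a h1.le, hlo b h2] at hab
      exact absurd hab (havoid _ (by omega) (by omega) b h2)
    · rw [hhi a h1.le, hhi b h2.le] at hab
      have := hinj (Set.mem_Iic.2 (by omega : a - j ≤ m)) (Set.mem_Iic.2 (by omega)) hab
      omega

lemma exists_append_suffix (hu : g.IsAltSeq u L) (hq : g.IsAltSeq q j) {t : ℕ} (ht : t ≤ L)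
    (hqt : q j = u t) (hpar : j % 2 = t % 2)
    (havoid : ∀ k ≤ j, ∀ t', t < t' → t' ≤ L → q k ≠ u t') :
    ∃ w, g.IsAltSeq w (j + (L - t)) ∧ w (j + (L - t)) = u L := by
  refine ⟨_, hq.append (c := fun i => u (t + i)) hqt.symm (fun i hi => hu.adj _ (by omega))
    (fun i hi => (hu.matched_iff (t + i) (by omega)).trans (by omega)) ?_
    (fun a ha0 ha k hk => (havoid k hk (t + a) (by omega) (by omega)).symm), ?_⟩
  · intro a ha b hb hab
    simp only [Set.mem_Iic] at ha hb
    have := hu.injOn (Set.mem_Iic.2 (by omega : t + a ≤ L)) (Set.mem_Iic.2 (by omega)) hab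
    omega
  · rcases ht.eq_or_lt with rfl | ht
    · simp [hqt]
    · simp only [if_neg (by omega : ¬ j + (L - t) ≤ j)]
      congr 1; omega

lemma exists_append_reverse (hu : g.IsAltSeq u L) (hq : g.IsAltSeq q j) (hqL : q j = u L)
    (hpar : (j + L) % 2 = 1) {i : ℕ} (hi : i < L)
    (havoid : ∀ k ≤ j, ∀ t, i ≤ t → t < L → q k ≠ u t) :
    ∃ w, g.IsAltSeq w (j + (L - i)) ∧ w (j + (L - i)) = u i ∧
      w (j + (L - i) - 1) = u (i + 1) := by
  have hMsymm : ∀ x y : V, g.M x y ↔ g.M y x := fun x y => ⟨g.M_symm x y, g.M_symm y x⟩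
  refine ⟨_, hq.append (c := fun a => u (L - a)) (by simp [hqL])
    (fun a ha => ?_) (fun a ha => ?_) ?_
    (fun a ha0 ha k hk => (havoid k hk (L - a) (by omega) (by omega)).symm), ?_, ?_⟩
  · have := hu.adj (L - (a + 1)) (by omega)
    rw [show L - (a + 1) + 1 = L - a by omega] at this
    exact g.symm _ _ this
  · have := hu.matched_iff (L - (a + 1)) (by omega)
    rw [show L - (a + 1) + 1 = L - a by omega] at this
    rw [hMsymm, this]
    omega
  · intro a ha b hb hab
    simp only [Set.mem_Iic] at ha hb
    have := hu.injOn (Set.mem_Iic.2 (by omega : L - a ≤ L)) (Set.mem_Iic.2 (by omega)) hab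
    omega
  · simp only [if_neg (by omega : ¬ j + (L - i) ≤ j)]
    congr 1; omega
  · rcases (Nat.succ_le_of_lt hi).eq_or_lt with h | h
    · simp [← h, hqL]
    · simp only [if_neg (by omega : ¬ j + (L - i) - 1 ≤ j)]
      congr 1; omega

end IsAltSeq

/-- Take the last position of `u` that `q` meets: if the parities agree, following `u` from
there gives a path to `u L` of length at least `L`; otherwise the two paths to that vertex bound
its tenacity. -/
lemma IsAltSeq.le_or_tm_le_of_meet {u q : ℕ → V} {L m j t : ℕ} (hu : g.IsAltSeq u L)
    (hL : g.level L (u L) = L) (hq : g.IsAltSeq q m) (hj : j ≤ m) (ht : t ≤ L)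
    (hqt : q j = u t) : t ≤ m ∨ g.tm ≤ (m + L : ℕ) := by
  set P : ℕ → Prop := fun t' => ∃ k ≤ m, q k = u t'
  have hP : P t := ⟨j, hj, hqt⟩
  set t' := Nat.findGreatest P L
  have htt' : t ≤ t' := Nat.le_findGreatest ht hP
  have ht'L : t' ≤ L := Nat.findGreatest_le L
  obtain ⟨k, hk, hqk⟩ : P t' := Nat.findGreatest_spec ht hP
  by_cases hpar : k % 2 = t' % 2
  · left
    obtain ⟨w, hw, hwL⟩ := hu.exists_append_suffix (hq.mono hk) ht'L hqk hpar
      fun k' hk' t'' h1 h2 heq => Nat.findGreatest_is_greatest h1 h2 ⟨k', by omega, heq⟩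
    have hlen := hwL ▸ hw.level_le
    rw [level_congr (k' := L) (by omega), hL, Nat.cast_le] at hlen
    omega
  · right
    calc g.tm ≤ g.tenacity (u t') := tm_le_tenacity _
      _ ≤ (k + t' : ℕ) := tenacity_le_add (hq.mono hk) (hu.mono ht'L) hqk rfl hpar
      _ ≤ (m + L : ℕ) := Nat.cast_le.2 (by omega)

lemma IsAltSeq.isPred {w : ℕ → V} {n : ℕ} (hw : g.IsAltSeq w n) (hn : 0 < n)
    (hm : g.minlevel (w n) = n) : g.IsPred (w (n - 1)) (w n) :=
  ⟨_, _, ⟨hw.altPathFrom, by simpa using hm.symm⟩, by simp; omega,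
    by rw [List.length_map, List.length_range, show n + 1 - 2 = n - 1 by omega,
      List.getD_map_range w (by omega)]⟩

/-- The last edge of a path of length `n` has index `n - 1`, so it is matched iff `n` is even. -/
lemma IsPred.matched_iff {x y : V} {n : ℕ} (h : g.IsPred x y) (hy : g.minlevel y = n) :
    g.M x y ↔ n % 2 = 0 := by
  obtain ⟨p, f, ⟨hpf, hlen⟩, hp2, hx⟩ := h
  obtain ⟨hw, hy'⟩ := hpf.isAltSeq
  obtain rfl : n = p.length - 1 := by rw [hy] at hlen; exact_mod_cast hlen.symm
  have := hw.matched_iff (p.length - 2) (by omega)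
  rw [show p.length - 2 + 1 = p.length - 1 by omega] at this
  simp only [hx, hy'] at this
  rw [this]
  omega

lemma exists_isAltSeq_of_minlevel_lt {x : V} {n : ℕ} (h : g.minlevel x < n) :
    ∃ m < n, ∃ w, g.IsAltSeq w m ∧ w m = x := by
  rw [minlevel_eq_min_level 0, min_lt_iff] at h
  obtain ⟨k, hk⟩ : ∃ k, g.level k x < n := h.elim (⟨0, ·⟩) (⟨1, ·⟩)
  obtain ⟨m, hm, -⟩ := ENat.le_natCast_iff.1 hk.le
  obtain ⟨w, hw, hwx, -⟩ := exists_isAltSeq_of_level_eq hm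
  exact ⟨m, by exact_mod_cast hm ▸ hk, w, hw, hwx⟩

/-- The bridge of the theorem will be the edge `(u r, u (r + 1))`. -/
structure BridgeSplit (g : MatchedGraph V) (u : ℕ → V) (L s r : ℕ) : Prop where
  isAltSeq : g.IsAltSeq u L
  level_last : g.level L (u L) = L
  level_succ_last : g.level (L + 1) (u L) = s
  tm_eq : g.tm = (L + s : ℕ)
  minlevel_of_le : ∀ i ≤ r, g.minlevel (u i) = i
  minlevel_succ_lt : g.minlevel (u (r + 1)) < (r + 1 : ℕ)
  lt_length : r < L

namespace BridgeSplit

variable {u : ℕ → V} {L s r : ℕ}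

lemma add_mod_two_eq_one (h : g.BridgeSplit u L s r) : (L + s) % 2 = 1 := by
  have := mod_two_eq_of_level_eq h.level_succ_last
  omega

lemma s_le_r (h : g.BridgeSplit u L s r) : s ≤ r := by
  obtain ⟨m, hm, q, hq, hqr⟩ := exists_isAltSeq_of_minlevel_lt h.minlevel_succ_lt
  rcases h.isAltSeq.le_or_tm_le_of_meet h.level_last hq le_rfl h.lt_length hqr with hle | hle
  · omega
  · rw [h.tm_eq, Nat.cast_le] at hle
    omega

/-- The meeting point `u t` with `t > r ≥ s` would be reached by a path shorter than `t`. -/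
lemma ne_of_lt_of_lt_length (h : g.BridgeSplit u L s r) {q : ℕ → V} (hq : g.IsAltSeq q s)
    (hqL : q s = u L) {k t : ℕ} (hk : k ≤ s) (hrt : r < t) (htL : t < L) : q k ≠ u t := by
  intro hqt
  have hks : k ≠ s := by
    rintro rfl
    have := h.isAltSeq.injOn (Set.mem_Iic.2 htL.le) (Set.mem_Iic.2 le_rfl) (hqt.symm.trans hqL)
    omega
  have := h.s_le_r
  rcases h.isAltSeq.le_or_tm_le_of_meet h.level_last (hq.mono (Nat.sub_le s 1)) (by omega)
    htL.le hqt with hle | hle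
  · omega
  · rw [h.tm_eq, Nat.cast_le] at hle
    omega

lemma exists_reverse_path (h : g.BridgeSplit u L s r) {i : ℕ} (hri : r < i) (hiL : i < L) :
    ∃ w, g.IsAltSeq w (s + (L - i)) ∧ w (s + (L - i)) = u i ∧
      w (s + (L - i) - 1) = u (i + 1) := by
  obtain ⟨q, hq, hqL, -⟩ := exists_isAltSeq_of_level_eq h.level_succ_last
  exact h.isAltSeq.exists_append_reverse hq hqL (by have := h.add_mod_two_eq_one; omega) hiL
    fun k hk t hit htL => h.ne_of_lt_of_lt_length hq hqL hk (by omega) htL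

/-- Past `r`, the prefix of `u` and the reversed suffix continued by a shortest path to `u L`
realize both levels of `u i`; they are exact because they add up to `tm`. -/
lemma level_of_lt (h : g.BridgeSplit u L s r) {i : ℕ} (hri : r < i) (hiL : i ≤ L) :
    g.level i (u i) = i ∧ g.level (i + 1) (u i) = (L + s - i : ℕ) := by
  have hlo : g.level i (u i) ≤ i := (h.isAltSeq.mono hiL).level_le
  have hhi : g.level (i + 1) (u i) ≤ (L + s - i : ℕ) := by
    rcases hiL.eq_or_lt with rfl | hiL
    · rw [h.level_succ_last]; exact Nat.cast_le.2 (by omega)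
    · obtain ⟨w, hw, hwi, -⟩ := h.exists_reverse_path hri hiL
      have := hwi ▸ hw.level_le
      rwa [level_congr (k' := i + 1) (by have := h.add_mod_two_eq_one; omega),
        show s + (L - i) = L + s - i by omega] at this
  obtain ⟨a, ha, hai⟩ := ENat.le_natCast_iff.1 hlo
  obtain ⟨b, hb, hbi⟩ := ENat.le_natCast_iff.1 hhi
  have hten : (L + s : ℕ) ≤ (a + b : ℕ∞) := by
    rw [← h.tm_eq, ← ha, ← hb, ← tenacity_eq_level_add_level_succ]
    exact tm_le_tenacity _
  norm_cast at hten
  rw [ha, hb]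
  exact ⟨by norm_cast; omega, by norm_cast; omega⟩

lemma minlevel_of_lt (h : g.BridgeSplit u L s r) {i : ℕ} (hri : r < i) (hiL : i ≤ L) :
    g.minlevel (u i) = (L + s - i : ℕ) := by
  have hmin := h.minlevel_succ_lt
  obtain ⟨hlo, hhi⟩ := h.level_of_lt hri hiL
  obtain ⟨hlo1, hhi1⟩ := h.level_of_lt r.lt_succ_self h.lt_length
  rw [minlevel_eq_min_level (r + 1), hlo1, hhi1, min_lt_iff, Nat.cast_lt, Nat.cast_lt] at hmin
  rw [minlevel_eq_min_level i, hlo, hhi]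
  exact min_eq_right (Nat.cast_le.2 (by omega))

lemma isPred_of_lt (h : g.BridgeSplit u L s r) {i : ℕ} (hir : i < r) :
    g.IsPred (u i) (u (i + 1)) :=
  (h.isAltSeq.mono (by have := h.lt_length; omega)).isPred i.succ_pos (h.minlevel_of_le _ hir)

lemma isPred_of_gt (h : g.BridgeSplit u L s r) {i : ℕ} (hri : r < i) (hiL : i < L) :
    g.IsPred (u (i + 1)) (u i) := by
  obtain ⟨w, hw, hwi, hwi'⟩ := h.exists_reverse_path hri hiL
  have := hw.isPred (by omega) (by rw [hwi, h.minlevel_of_lt hri hiL.le]; congr 1; omega)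
  rwa [hwi, hwi'] at this

lemma isBridge (h : g.BridgeSplit u L s r) : g.IsBridge (u r) (u (r + 1)) := by
  have hM := h.isAltSeq.matched_iff r h.lt_length
  have := h.add_mod_two_eq_one
  have := h.lt_length
  refine ⟨h.isAltSeq.adj r h.lt_length, fun hprop => ?_⟩
  rcases hprop with hp | hp
  · have hM' := hp.matched_iff (h.minlevel_of_lt r.lt_succ_self h.lt_length)
    by_cases hm : g.M (u r) (u (r + 1)) <;> simp only [hm, false_iff, true_iff] at hM hM' <;> omega
  · have hM' := hp.matched_iff (h.minlevel_of_le r le_rfl)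
    have hsymm : g.M (u (r + 1)) (u r) ↔ g.M (u r) (u (r + 1)) := ⟨g.M_symm _ _, g.M_symm _ _⟩
    rw [hsymm] at hM'
    by_cases hm : g.M (u r) (u (r + 1)) <;> simp only [hm, false_iff, true_iff] at hM hM' <;> omega

lemma etenacity_eq (h : g.BridgeSplit u L s r) : g.etenacity (u r) (u (r + 1)) = g.tm := by
  have hr : g.level r (u r) = r := le_antisymm (h.isAltSeq.mono h.lt_length.le).level_le
    (by rw [← h.minlevel_of_le r le_rfl, minlevel_eq_min_level r]; exact min_le_left _ _)
  have hr1 := (h.level_of_lt r.lt_succ_self h.lt_length).2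
  rw [etenacity_eq_level (h.isAltSeq.matched_iff r h.lt_length), hr,
    level_congr (k' := r + 1 + 1) (by omega), hr1, h.tm_eq]
  norm_cast
  have := h.lt_length
  omega

lemma existsUnique_bridge (h : g.BridgeSplit u L s r) :
    ∃! i, i < L ∧ g.IsBridge (u i) (u (i + 1)) ∧ g.etenacity (u i) (u (i + 1)) = g.tm := by
  refine ⟨r, ⟨h.lt_length, h.isBridge, h.etenacity_eq⟩, fun i ⟨hiL, hi, _⟩ => ?_⟩
  by_contra hne
  rcases Nat.lt_or_gt_of_ne hne with hir | hri
  · exact hi.2 (Or.inl (h.isPred_of_lt hir))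
  · exact hi.2 (Or.inr (h.isPred_of_gt hri hiL))

end BridgeSplit

namespace IsAltSeq

variable {u : ℕ → V} {L : ℕ}

lemma exists_first_minlevel_lt (hu : g.IsAltSeq u L) (hL : g.minlevel (u L) < L) :
    ∃ r < L, (∀ i ≤ r, g.minlevel (u i) = i) ∧ g.minlevel (u (r + 1)) < (r + 1 : ℕ) := by
  have hex : ∃ j, g.minlevel (u j) < j := ⟨L, hL⟩
  obtain ⟨r, hr⟩ : ∃ r, Nat.find hex = r + 1 :=
    Nat.exists_eq_succ_of_ne_zero fun h0 => by simpa [h0] using Nat.find_spec hex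
  refine ⟨r, by have := Nat.find_min' hex hL; omega, fun i hi => le_antisymm ?_ ?_,
    hr ▸ Nat.find_spec hex⟩
  · exact (minlevel_eq_min_level i _).trans_le ((min_le_left _ _).trans
      (hu.mono (by have := Nat.find_min' hex hL; omega)).level_le)
  · exact not_lt.1 (Nat.find_min hex (by omega))

lemma exists_bridgeSplit (hu : g.IsAltSeq u L) (hmax : g.maxlevel (u L) = L)
    (hten : g.tenacity (u L) = g.tm) : ∃ s r, g.BridgeSplit u L s r := by
  have hsum := tenacity_eq_level_add_level_succ (g := g) L (u L)
  have hmax' := maxlevel_eq_max_level L (u L) ▸ hmax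
  obtain ⟨a, ha, -⟩ := ENat.le_natCast_iff.1 (hmax' ▸ le_max_left _ _)
  obtain ⟨s, hs, -⟩ := ENat.le_natCast_iff.1 (hmax' ▸ le_max_right _ _)
  have hsL := mod_two_eq_of_level_eq hs
  rw [ha, hs, ← Nat.mono_cast.map_max, Nat.cast_inj] at hmax'
  have haL : a = L := by
    have := mod_two_eq_of_level_eq ha
    omega
  obtain ⟨r, hrL, hr, hr1⟩ := hu.exists_first_minlevel_lt (by
    rw [minlevel_eq_min_level L, ha, hs]
    exact min_lt_of_right_lt (Nat.cast_lt.2 (by omega)))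
  exact ⟨s, r, hu, haL ▸ ha, hs, by rw [← hten, hsum, ha, hs, haL, Nat.cast_add], hr, hr1,
    hrL⟩

end IsAltSeq

end MatchedGraph

theorem unique_bridge_on_maxlevelPath_general (g : MatchedGraph V) (v : V)
    (h1 : g.tenacity v = g.tm)
    (p : List V) (f : V) (hp : g.IsMaxlevelPath p f v) :
    ∃! i : ℕ, i + 1 < p.length ∧
      g.IsBridge (p.getD i f) (p.getD (i + 1) f) ∧
      g.etenacity (p.getD i f) (p.getD (i + 1) f) = g.tm := by
  obtain ⟨hu, hv⟩ := hp.1.isAltSeq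
  obtain ⟨s, r, hsplit⟩ := hu.exists_bridgeSplit (by rw [hv]; exact hp.2.symm) (hv ▸ h1)
  simpa only [Nat.lt_sub_iff_add_lt] using hsplit.existsUnique_bridge

/-- Let `v` have minimum tenacity `t_m < l_m`. Then every
`maxlevel(v)` path contains a unique bridge of tenacity `t_m`. -/
theorem unique_bridge_on_maxlevelPath (g : MatchedGraph V) (v : V)
    (h1 : g.tenacity v = g.tm) (h2 : g.tm < g.lm)
    (p : List V) (f : V) (hp : g.IsMaxlevelPath p f v) :
    ∃! i : ℕ, i + 1 < p.length ∧
      g.IsBridge (p.getD i f) (p.getD (i + 1) f) ∧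
      g.etenacity (p.getD i f) (p.getD (i + 1) f) = g.tm :=
  unique_bridge_on_maxlevelPath_general g v h1 p f hp
end

section
/- If (u, v) is a matched bridge with tenacity(u, v) <= l_m, then both u and v are inner vertices (i.e., their minlevels are odd). -/
open scoped Classical

universe u

variable {V : Type u}

/-!
If `u` were outer, an `evenlevel(u)` path would also be a `minlevel(u)` path. It has even length,
starts with an unmatched edge at a free vertex, and ends at the matched vertex `u`, so it has at
least two edges and its last edge is matched, hence is `(v, u)`. Then `v` is a predecessor of `u`
and `(u, v)` is a prop, not a bridge.
-/

namespace MatchedGraph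

variable {g : MatchedGraph V} {p : List V} {b f u v w : V}

lemma AltPath.getD_length_sub_one (h : g.AltPath p b v) : p.getD (p.length - 1) b = v := by
  obtain ⟨hhead, hlast, -⟩ := h
  have hp : p ≠ [] := by rintro rfl; simp at hhead
  rw [List.getLast?_eq_some_getLast hp, Option.some.injEq] at hlast
  rw [List.getD_eq_getElem?_getD, List.getElem?_eq_getElem (by grind), ← hlast,
    List.getLast_eq_getElem]
  rfl

lemma AltPathFrom.two_le_length_of_M (h : g.AltPathFrom p f v) (hm : g.M v w) :
    2 ≤ p.length := by
  obtain ⟨hf, hhead, hlast, -⟩ := h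
  match p, hhead, hlast with
  | [x], hhead, hlast =>
    simp only [List.head?_cons, List.getLast?_singleton, Option.some.injEq] at hhead hlast
    exact absurd (hhead ▸ hlast ▸ hm) (hf w)
  | _ :: _ :: _, _, _ => simp

lemma AltPath.M_last_of_even (h : g.AltPath p b v) (h2 : 2 ≤ p.length)
    (he : Even (p.length - 1)) : g.M (p.getD (p.length - 2) b) v := by
  have hidx : p.length - 2 + 1 = p.length - 1 := by omega
  have hstep := (h.2.2.2 (p.length - 2) (by omega)).2
  rw [hidx, h.getD_length_sub_one] at hstep
  exact hstep.2 (by obtain ⟨k, hk⟩ := he; omega)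

lemma exists_isEvenlevelPath (h : g.evenlevel v ≠ ⊤) : ∃ p f, g.IsEvenlevelPath p f v := by
  have hne : {n : ℕ∞ | ∃ p f, g.AltPathFrom p f v ∧ Even (p.length - 1) ∧
      n = ((p.length - 1 : ℕ) : ℕ∞)}.Nonempty :=
    Set.nonempty_iff_ne_empty.2 fun he => h (by rw [evenlevel, he, sInf_empty])
  obtain ⟨p, f, hp, he, hlen⟩ := csInf_mem hne
  exact ⟨p, f, hp, he, hlen.symm⟩

lemma isPred_of_M_of_isOuter (hm : g.M u w) (ho : g.IsOuter u) : g.IsPred w u := by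
  obtain ⟨p, f, hp, he, hlen⟩ := exists_isEvenlevelPath (ne_top_of_lt ho)
  have h2 := hp.two_le_length_of_M hm
  have hlast : p.getD (p.length - 2) f = w :=
    g.M_matching u _ _ (g.M_symm _ _ (hp.2.M_last_of_even h2 he)) hm
  refine ⟨p, f, ⟨hp, ?_⟩, h2, hlast⟩
  rw [hlen, minlevel, min_eq_left ho.le]

lemma IsBridge.symm (h : g.IsBridge u w) : g.IsBridge w u :=
  ⟨g.symm _ _ h.1, fun hp => h.2 hp.symm⟩

lemma IsBridge.isInner_of_M (hb : g.IsBridge u w) (hm : g.M u w) : g.IsInner u :=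
  not_lt.1 fun ho => hb.2 (Or.inr (isPred_of_M_of_isOuter hm ho))

end MatchedGraph

theorem inner_of_matched_bridge_general (g : MatchedGraph V) (u v : V)
    (hm : g.M u v) (hb : g.IsBridge u v) :
    g.IsInner u ∧ g.IsInner v :=
  ⟨hb.isInner_of_M hm, hb.symm.isInner_of_M (g.M_symm _ _ hm)⟩

/-- If `(u, v)` is a matched bridge with `tenacity(u, v) ≤ l_m`,
then both `u` and `v` are inner vertices. -/
theorem inner_of_matched_bridge (g : MatchedGraph V) (u v : V)
    (hm : g.M u v) (hb : g.IsBridge u v) (ht : g.etenacity u v ≤ g.lm) :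
    g.IsInner u ∧ g.IsInner v :=
  inner_of_matched_bridge_general g u v hm hb
end

section
/- If v belongs to the blossom B_{b,t}, then there exists k with 1 <= k <= N(B_{b,t}) such that b = base^k(v), and moreover base(v), base^2(v), ..., base^{k-1}(v) all belong to B_{b,t}, where N denotes nesting depth. -/
open scoped Classical

universe u

variable {V : Type u}

/-!
Induct along the recursive definition of `B_{b,t}`. A vertex of `S_{b,t}` has base `b`. A vertex
of a sub-blossom `B_{w,t-2}` reaches `w` by induction; from there, one more base step reaches `b`
when `w ∈ S_{b,t}`, and none is needed when `w = b`. Bases are unique, so the chain of iterated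
bases of `v` is determined, and the intermediate ones lie in the sub-blossom or equal `w`.
-/

namespace MatchedGraph

variable (g : MatchedGraph V)

lemma baseOf_unique {u b b' : V} (h : g.baseOf u b) (h' : g.baseOf u b') : b = b' :=
  Set.singleton_eq_singleton_iff.1 (h.symm.trans h')

lemma iterBase_unique : ∀ {k : ℕ} {v u u' : V}, g.iterBase k v u → g.iterBase k v u' → u = u'
  | 0, _, _, _, h, h' => h.symm.trans h'
  | _ + 1, _, _, _, ⟨_, hw, hb⟩, ⟨_, hw', hb'⟩ => by
    obtain rfl := iterBase_unique hw hw'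
    exact g.baseOf_unique hb hb'

lemma mem_blossom_add_two {t : ℕ} {b v : V} :
    v ∈ g.blossom (t + 2) b ↔ v ∈ g.Sset (t + 2) b ∨
      ∃ w, (w ∈ g.Sset (t + 2) b ∨ w = b) ∧ g.IsOuter w ∧ v ∈ g.blossom t w := by
  simp only [blossom, Set.mem_union, Set.mem_iUnion₂, Set.mem_ofPred_eq, exists_prop, and_assoc]

lemma blossom_subset_blossom_add_two {t : ℕ} {b w : V} (hw : w ∈ g.Sset (t + 2) b ∨ w = b)
    (ho : g.IsOuter w) : g.blossom t w ⊆ g.blossom (t + 2) b :=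
  fun _ hv ↦ (g.mem_blossom_add_two).2 (Or.inr ⟨w, hw, ho, hv⟩)

lemma Sset_subset_blossom_add_two (t : ℕ) (b : V) : g.Sset (t + 2) b ⊆ g.blossom (t + 2) b :=
  fun _ hv ↦ (g.mem_blossom_add_two).2 (Or.inl hv)

def IsBaseChain (B : Set V) (k : ℕ) (v b : V) : Prop :=
  g.iterBase k v b ∧ ∀ j u, 1 ≤ j → j < k → g.iterBase j v u → u ∈ B

namespace IsBaseChain

variable {g} {B B' : Set V} {k : ℕ} {v w b : V}

lemma one (h : g.baseOf v b) : g.IsBaseChain B 1 v b :=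
  ⟨⟨v, rfl, h⟩, fun _ _ h₁ h₂ _ ↦ absurd h₂ (not_lt.2 h₁)⟩

lemma mono (h : g.IsBaseChain B k v b) (hB : B ⊆ B') : g.IsBaseChain B' k v b :=
  ⟨h.1, fun j u h₁ h₂ hj ↦ hB (h.2 j u h₁ h₂ hj)⟩

lemma succ (h : g.IsBaseChain B k v w) (hB : B ⊆ B') (hw : w ∈ B') (hb : g.baseOf w b) :
    g.IsBaseChain B' (k + 1) v b := by
  refine ⟨⟨w, h.1, hb⟩, fun j u h₁ h₂ hj ↦ ?_⟩
  rcases (Nat.lt_succ_iff.1 h₂).lt_or_eq with hlt | rfl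
  · exact hB (h.2 j u h₁ hlt hj)
  · rwa [g.iterBase_unique hj h.1]

end IsBaseChain

section ndepth

variable [Fintype V] {t : ℕ} {b w : V}

lemma one_le_ndepth_add_two (hS : (g.Sset (t + 2) b).Nonempty) : 1 ≤ g.ndepth (t + 2) b := by
  rw [ndepth, if_pos hS]
  exact Nat.le_add_right 1 _

lemma one_add_ndepth_le_ndepth_add_two (hS : (g.Sset (t + 2) b).Nonempty)
    (hw : w ∈ g.Sset (t + 2) b ∨ w = b) (ho : g.IsOuter w) :
    1 + g.ndepth t w ≤ g.ndepth (t + 2) b := by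
  rw [ndepth, if_pos hS]
  have hle := Finset.le_sup (f := fun v ↦ if (v ∈ g.Sset (t + 2) b ∨ v = b) ∧ g.IsOuter v
    then g.ndepth t v else 0) (Finset.mem_univ w)
  rw [if_pos ⟨hw, ho⟩] at hle
  exact Nat.add_le_add_left hle 1

lemma ndepth_le_ndepth_add_two (ho : g.IsOuter b) : g.ndepth t b ≤ g.ndepth (t + 2) b := by
  by_cases hS : (g.Sset (t + 2) b).Nonempty
  · have := g.one_add_ndepth_le_ndepth_add_two hS (Or.inr rfl) ho
    omega
  · rw [ndepth, if_neg hS]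

end ndepth

end MatchedGraph

theorem iterBase_of_mem_blossom_general [Fintype V] (g : MatchedGraph V) (t : ℕ)
    (b v : V)
    (hv : v ∈ g.blossom t b) :
    ∃ k, 1 ≤ k ∧ k ≤ g.ndepth t b ∧ g.iterBase k v b ∧
      ∀ j u, 1 ≤ j → j < k → g.iterBase j v u → u ∈ g.blossom t b := by
  change ∃ k, 1 ≤ k ∧ k ≤ g.ndepth t b ∧ g.IsBaseChain (g.blossom t b) k v b
  induction t using Nat.twoStepInduction generalizing b v with
  | zero => simp [MatchedGraph.blossom] at hv
  | one => simp [MatchedGraph.blossom] at hv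
  | more t ih _ =>
    rcases g.mem_blossom_add_two.1 hv with hS | ⟨w, hw, ho, hvw⟩
    · exact ⟨1, le_rfl, g.one_le_ndepth_add_two ⟨v, hS⟩, .one hS.2⟩
    obtain ⟨k, hk, hkN, hchain⟩ := ih w v hvw
    have hsub := g.blossom_subset_blossom_add_two hw ho
    rcases hw with hwS | rfl
    · have hN := g.one_add_ndepth_le_ndepth_add_two ⟨w, hwS⟩ (Or.inl hwS) ho
      refine ⟨k + 1, by omega, by omega,
        hchain.succ hsub (g.Sset_subset_blossom_add_two t b hwS) hwS.2⟩
    · exact ⟨k, hk, hkN.trans (g.ndepth_le_ndepth_add_two ho), hchain.mono hsub⟩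

/-- If `v ∈ B_{b,t}`, then there exists `k` with
`1 ≤ k ≤ N(B_{b,t})` such that `b = base^k(v)`, and moreover
`base(v), …, base^{k-1}(v)` all belong to `B_{b,t}`. -/
theorem iterBase_of_mem_blossom [Fintype V] (g : MatchedGraph V) (t : ℕ)
    (b v : V) (hodd : Odd t)
    (he1 : g.tm ≤ (t : ℕ∞)) (he2 : (t : ℕ∞) < g.lm)
    (houter : g.IsOuter b) (htb : (t : ℕ∞) < g.tenacity b)
    (hclaim : ∀ w, g.tenacity w ≤ (t : ℕ∞) → ∃ b', g.baseOf w b')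
    (hv : v ∈ g.blossom t b) :
    ∃ k, 1 ≤ k ∧ k ≤ g.ndepth t b ∧ g.iterBase k v b ∧
      ∀ j u, 1 ≤ j → j < k → g.iterBase j v u → u ∈ g.blossom t b :=
  iterBase_of_mem_blossom_general g t b v hv
end
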